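/- arXiv:1812.09589 — 3 statements merged into one kernel-verified Lean document; each statement's English description precedes it below -/
import Mathlib

section
/- Let A(x) be a d×d positive semidefinite symmetric matrix and let F(x,X) := −Tr(A(x)X). If Z ∈ ℝ^d is a generalized subunit vector for F at x, then there exists r > 0 such that rZ is subunit for A(x) in the sense of Fefferman–Phong, i.e. A(x) ≥ (rZ) ⊗ (rZ). -/
/-!
Since `Tr A ≥ 0`, the hypothesis forces `p·Ap > 0` whenever `Z·p ≠ 0`, so `Z ⊥ ker A`. For the
symmetric `A` this means `Z ∈ (ker A)ᗮ = range A`, say `Z = Aw`, and Cauchy–Schwarz for the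
semi-inner product `(x, y) ↦ x·Ay` gives `(Z·ξ)² ≤ (w·Aw)(ξ·Aξ)`; any `r > 0` with
`r²(w·Aw) ≤ 1` works.
-/

open Set Metric Filter Topology

noncomputable section

/-- Euclidean space `ℝ^d`. -/
abbrev EV (d : ℕ) := EuclideanSpace ℝ (Fin d)

/-- The outer product `p ⊗ p` as a `d × d` matrix. -/
def outer {d : ℕ} (p : EV d) : Matrix (Fin d) (Fin d) ℝ := Matrix.of fun i j => p i * p j

/-- Euclidean dot product. -/
def dotp {d : ℕ} (p q : EV d) : ℝ := ∑ i, p i * q i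

/-- Euclidean gradient. -/
def grad {d : ℕ} (φ : EV d → ℝ) (x : EV d) : EV d :=
  (EuclideanSpace.equiv (Fin d) ℝ).symm fun i => fderiv ℝ φ x (EuclideanSpace.single i 1)

/-- Euclidean Hessian matrix. -/
def hess {d : ℕ} (φ : EV d → ℝ) (x : EV d) : Matrix (Fin d) (Fin d) ℝ :=
  Matrix.of fun i j =>
    fderiv ℝ (fun y => fderiv ℝ φ y (EuclideanSpace.single j 1)) x (EuclideanSpace.single i 1)

/-- `F` is proper: nondecreasing in `r`, nonincreasing in the matrix argument
(w.r.t. the positive semidefinite order `Y ≤ X ↔ (X - Y).PosSemidef`). -/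
def IsProper {d m : ℕ} (Ω : Set (EV d))
    (F : EV d → ℝ → EV m → Matrix (Fin m) (Fin m) ℝ → ℝ) : Prop :=
  ∀ x ∈ Ω, ∀ r s : ℝ, ∀ p : EV m, ∀ X Y : Matrix (Fin m) (Fin m) ℝ,
    r ≤ s → (X - Y).PosSemidef → F x r p X ≤ F x s p Y

/-- Lower semicontinuity of the operator `F`, jointly in all its arguments. -/
def IsLscOperator {d m : ℕ} (Ω : Set (EV d))
    (F : EV d → ℝ → EV m → Matrix (Fin m) (Fin m) ℝ → ℝ) : Prop :=
  LowerSemicontinuousOn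
    (fun q : EV d × ℝ × EV m × Matrix (Fin m) (Fin m) ℝ => F q.1 q.2.1 q.2.2.1 q.2.2.2)
    {q | q.1 ∈ Ω ∧ q.2.2.1 ≠ 0 ∧ q.2.2.2.IsSymm}

/-- Condition (ii) (scaling): for some `φ : (0,1] → (0,∞)`,
`F(x, ξs, ξp, ξX) ≥ φ(ξ) F(x,s,p,X)` for all `ξ ∈ (0,1]`, `s ∈ [-1,0]`. -/
def HasScaling {d m : ℕ} (Ω : Set (EV d))
    (F : EV d → ℝ → EV m → Matrix (Fin m) (Fin m) ℝ → ℝ) : Prop :=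
  ∃ φ : ℝ → ℝ, (∀ ξ ∈ Ioc (0:ℝ) 1, 0 < φ ξ) ∧
    ∀ ξ ∈ Ioc (0:ℝ) 1, ∀ s ∈ Icc (-1:ℝ) 0, ∀ x ∈ Ω, ∀ p : EV m, p ≠ 0 →
      ∀ X : Matrix (Fin m) (Fin m) ℝ, X.IsSymm →
        φ ξ * F x s p X ≤ F x (ξ * s) (ξ • p) (ξ • X)

/-- Ellipticity condition (elli) for a subelliptic operator `G`. -/
def IsElliptic {d m : ℕ} (Ω : Set (EV d))
    (G : EV d → ℝ → EV m → Matrix (Fin m) (Fin m) ℝ → ℝ) : Prop :=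
  ∀ x ∈ Ω, ∀ q : EV m, q ≠ 0 → ∀ X : Matrix (Fin m) (Fin m) ℝ, X.IsSymm →
    ∃ γ : ℝ, 0 < γ ∧ 0 < G x 0 q (X - γ • outer q)

/-- `Z` is a generalized subunit vector for `F` at `x`:
`sup_{γ>0} F(x,0,p, I - γ p⊗p) > 0` whenever `Z·p ≠ 0`. -/
def IsSubunitAt {d : ℕ} (F : EV d → ℝ → EV d → Matrix (Fin d) (Fin d) ℝ → ℝ)
    (x : EV d) (Z : EV d) : Prop :=
  ∀ p : EV d, dotp Z p ≠ 0 → ∃ γ : ℝ, 0 < γ ∧ 0 < F x 0 p (1 - γ • outer p)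

/-- Viscosity subsolution (test functions with nonvanishing gradient). -/
def IsViscSubsol {d : ℕ} (Ω : Set (EV d))
    (F : EV d → ℝ → EV d → Matrix (Fin d) (Fin d) ℝ → ℝ) (u : EV d → ℝ) : Prop :=
  ∀ φ : EV d → ℝ, ContDiff ℝ 2 φ → ∀ x ∈ Ω,
    IsLocalMaxOn (fun y => u y - φ y) Ω x → grad φ x ≠ 0 →
      F x (u x) (grad φ x) (hess φ x) ≤ 0

/-- Viscosity supersolution (test functions with nonvanishing gradient). -/
def IsViscSupersol {d : ℕ} (Ω : Set (EV d))
    (F : EV d → ℝ → EV d → Matrix (Fin d) (Fin d) ℝ → ℝ) (v : EV d → ℝ) : Prop :=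
  ∀ φ : EV d → ℝ, ContDiff ℝ 2 φ → ∀ x ∈ Ω,
    IsLocalMinOn (fun y => v y - φ y) Ω x → grad φ x ≠ 0 →
      0 ≤ F x (v x) (grad φ x) (hess φ x)

/-- Viscosity subsolution (all `C²` test functions). -/
def IsViscSubsolAll {d : ℕ} (Ω : Set (EV d))
    (F : EV d → ℝ → EV d → Matrix (Fin d) (Fin d) ℝ → ℝ) (u : EV d → ℝ) : Prop :=
  ∀ φ : EV d → ℝ, ContDiff ℝ 2 φ → ∀ x ∈ Ω,
    IsLocalMaxOn (fun y => u y - φ y) Ω x →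
      F x (u x) (grad φ x) (hess φ x) ≤ 0

/-- Viscosity supersolution (all `C²` test functions). -/
def IsViscSupersolAll {d : ℕ} (Ω : Set (EV d))
    (F : EV d → ℝ → EV d → Matrix (Fin d) (Fin d) ℝ → ℝ) (v : EV d → ℝ) : Prop :=
  ∀ φ : EV d → ℝ, ContDiff ℝ 2 φ → ∀ x ∈ Ω,
    IsLocalMinOn (fun y => v y - φ y) Ω x →
      0 ≤ F x (v x) (grad φ x) (hess φ x)

/-- Locally Lipschitz on a set. -/
def LocLipschitzOn {α β : Type*} [PseudoMetricSpace α] [PseudoMetricSpace β]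
    (f : α → β) (s : Set α) : Prop :=
  ∀ x ∈ s, ∃ K : NNReal, ∃ ε : ℝ, 0 < ε ∧ LipschitzOnWith K f (s ∩ Metric.ball x ε)

/-- Admissible controls: measurable, with `∑ i βᵢ(t)² ≤ 1`. -/
def Admissible {m : ℕ} (β : ℝ → Fin m → ℝ) : Prop :=
  (∀ i, Measurable fun t => β t i) ∧ ∀ t : ℝ, ∑ i, (β t i) ^ 2 ≤ 1

/-- (Carathéodory) trajectory of the control system `y' = ∑ᵢ βᵢ Zᵢ(y)` on `[0, T]`. -/
def IsTrajOn {d m : ℕ} (Z : Fin m → EV d → EV d) (β : ℝ → Fin m → ℝ)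
    (y : ℝ → EV d) (T : ℝ) : Prop :=
  ContinuousOn y (Icc 0 T) ∧
    ∀ t ∈ Icc 0 T, y t = y 0 + ∫ s in (0:ℝ)..t, ∑ i, β s i • Z i (y s)

/-- `x₁` is reachable from `x₀` by the control system, with trajectory staying in `Ω`. -/
def ReachableIn {d m : ℕ} (Ω : Set (EV d)) (Z : Fin m → EV d → EV d)
    (x₀ x₁ : EV d) : Prop :=
  ∃ (β : ℝ → Fin m → ℝ) (y : ℝ → EV d) (T : ℝ), 0 ≤ T ∧ Admissible β ∧
    IsTrajOn Z β y T ∧ (∀ t ∈ Icc 0 T, y t ∈ Ω) ∧ y 0 = x₀ ∧ y T = x₁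

/-- Bounded time controllability in `Ω`. -/
def BTC {d m : ℕ} (Ω : Set (EV d)) (Z : Fin m → EV d → EV d) : Prop :=
  ∀ x₀ ∈ Ω, ∀ x₁ ∈ Ω, ReachableIn Ω Z x₀ x₁

/-- Generalized exterior (Bony, proximal) normal `ν` to `K` at `z`. -/
def IsExtNormal {d : ℕ} (K : Set (EV d)) (z ν : EV d) : Prop :=
  z ∈ frontier K ∧ ‖ν‖ = 1 ∧
    ∃ t : ℝ, 0 < t ∧ Metric.closedBall (z + t • ν) t ∩ closure K = {z}

/-- Lie bracket of two vector fields. -/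
def vfBracket {d : ℕ} (X Y : EV d → EV d) : EV d → EV d :=
  fun x => fderiv ℝ Y x (X x) - fderiv ℝ X x (Y x)

/-- Vector fields obtained from `Z₁,…,Z_m` by iterated Lie brackets. -/
inductive LieGenerated {d m : ℕ} (Z : Fin m → EV d → EV d) : (EV d → EV d) → Prop
  | base (i : Fin m) : LieGenerated Z (Z i)
  | bracket {X Y : EV d → EV d} :
      LieGenerated Z X → LieGenerated Z Y → LieGenerated Z (vfBracket X Y)

/-- Hörmander condition: the fields and their iterated brackets span `ℝ^d` at every point of `Ω`. -/
def Hormander {d m : ℕ} (Ω : Set (EV d)) (Z : Fin m → EV d → EV d) : Prop :=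
  ∀ x ∈ Ω, Submodule.span ℝ {v : EV d | ∃ W, LieGenerated Z W ∧ W x = v} = ⊤

/-- Intrinsic (horizontal) gradient `σ(x)ᵀ p`. -/
def sigmaT {d m : ℕ} (σ : Fin m → EV d → EV d) (x : EV d) (p : EV d) : EV m :=
  (EuclideanSpace.equiv (Fin m) ℝ).symm fun j => ∑ i, σ j x i * p i

/-- `σ(x)ᵀ X σ(x)` as an `m × m` matrix. -/
def sigmaHess {d m : ℕ} (σ : Fin m → EV d → EV d) (x : EV d)
    (X : Matrix (Fin d) (Fin d) ℝ) : Matrix (Fin m) (Fin m) ℝ :=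
  Matrix.of fun j k => ∑ i, ∑ l, σ j x i * X i l * σ k x l

/-- First-order correction term `g(x,p)` of the symmetrized intrinsic Hessian. -/
def corrTerm {d m : ℕ} (σ : Fin m → EV d → EV d) (x : EV d) (p : EV d) :
    Matrix (Fin m) (Fin m) ℝ :=
  Matrix.of fun j k =>
    ((∑ i, (fderiv ℝ (σ k) x (σ j x)) i * p i) +
      (∑ i, (fderiv ℝ (σ j) x (σ k x)) i * p i)) / 2

/-- Euclidean form `F(x,r,p,X) = G(x, r, σᵀp, σᵀXσ + g(x,p))` of a subelliptic operator. -/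
def euclOp {d m : ℕ} (σ : Fin m → EV d → EV d)
    (G : EV d → ℝ → EV m → Matrix (Fin m) (Fin m) ℝ → ℝ) :
    EV d → ℝ → EV d → Matrix (Fin d) (Fin d) ℝ → ℝ :=
  fun x r p X => G x r (sigmaT σ x p) (sigmaHess σ x X + corrTerm σ x p)

/-- `A ≥ Z ⊗ Z` in the quadratic-form sense: `ξᵀAξ ≥ (Z·ξ)²` for all `ξ`. -/
def matGEouter {d : ℕ} (A : Matrix (Fin d) (Fin d) ℝ) (Z : EV d) : Prop :=
  ∀ ξ : EV d, (dotp Z ξ) ^ 2 ≤ ∑ i, ∑ j, A i j * ξ i * ξ j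

open scoped InnerProductSpace

namespace LinearMap.IsPositive

variable {E : Type*} [NormedAddCommGroup E] [InnerProductSpace ℝ E] {T : E →ₗ[ℝ] E}

theorem inner_apply_sq_le (hT : T.IsPositive) (x y : E) :
    ⟪T x, y⟫_ℝ ^ 2 ≤ ⟪T x, x⟫_ℝ * ⟪T y, y⟫_ℝ := by
  have h :=
    BilinForm.apply_mul_apply_le_of_forall_zero_le (innerₗ E ∘ₗ T) hT.inner_nonneg_left x y
  simp only [LinearMap.comp_apply, innerₗ_apply_apply] at h
  have hsymm : ⟪T y, x⟫_ℝ = ⟪T x, y⟫_ℝ := (hT.isSymmetric y x).trans (real_inner_comm _ _)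
  rwa [hsymm, ← sq] at h

theorem exists_pos_sq_inner_smul_le [FiniteDimensional ℝ E] (hT : T.IsPositive) {z : E}
    (hz : z ∈ (ker T)ᗮ) : ∃ r : ℝ, 0 < r ∧ ∀ x, ⟪r • z, x⟫_ℝ ^ 2 ≤ ⟪T x, x⟫_ℝ := by
  rw [T.orthogonal_ker, hT.adjoint_eq] at hz
  obtain ⟨w, rfl⟩ := hz
  set q := ⟪T w, w⟫_ℝ
  have hq : 0 ≤ q := hT.inner_nonneg_left w
  -- `q / (1 + q) ^ 2 ≤ 1` avoids a square root in the choice of `r`.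
  refine ⟨(1 + q)⁻¹, by positivity, fun x => ?_⟩
  have hx : 0 ≤ ⟪T x, x⟫_ℝ := hT.inner_nonneg_left x
  calc ⟪(1 + q)⁻¹ • T w, x⟫_ℝ ^ 2 = ⟪T w, x⟫_ℝ ^ 2 / (1 + q) ^ 2 := by
        rw [real_inner_smul_left, mul_pow, inv_pow, inv_mul_eq_div]
    _ ≤ q * ⟪T x, x⟫_ℝ / (1 + q) ^ 2 := by gcongr; exact hT.inner_apply_sq_le w x
    _ ≤ ⟪T x, x⟫_ℝ := by
        rw [div_le_iff₀ (by positivity)]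
        nlinarith [mul_nonneg hq hx, mul_nonneg (sq_nonneg q) hx]

end LinearMap.IsPositive

theorem dotp_eq_inner {d : ℕ} (p q : EV d) : dotp p q = ⟪p, q⟫_ℝ := by
  simp only [dotp, PiLp.inner_apply, Real.inner_apply]

theorem sum_sum_mul_mul_eq_inner_toEuclideanLin {d : ℕ} (A : Matrix (Fin d) (Fin d) ℝ)
    (p : EV d) : ∑ i, ∑ j, A i j * p i * p j = ⟪A.toEuclideanLin p, p⟫_ℝ := by
  simp only [PiLp.inner_apply, Matrix.ofLp_toLpLin, Matrix.toLin'_apply, Real.inner_apply,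
    Matrix.mulVec, dotProduct, Finset.sum_mul]
  exact Finset.sum_congr rfl fun i _ => Finset.sum_congr rfl fun j _ => mul_right_comm _ _ _

/-- Lemma 2.1: if `Z` is a generalized subunit vector for the linear
operator `F(x,X) = -Tr(A(x)X)`, then `rZ` is a Fefferman–Phong subunit vector of the
positive semidefinite matrix `A(x)` for some `r > 0`. -/
theorem generalized_subunit_gives_feffermanPhong {d : ℕ}
    (A : Matrix (Fin d) (Fin d) ℝ) (hA : A.PosSemidef) (Z : EV d)
    (hZ : ∀ p : EV d, dotp Z p ≠ 0 →
      ∃ γ : ℝ, 0 < γ ∧ 0 < -A.trace + γ * ∑ i, ∑ j, A i j * p i * p j) :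
    ∃ r : ℝ, 0 < r ∧ matGEouter A (r • Z) := by
  have hT : A.toEuclideanLin.IsPositive := Matrix.isPositive_toEuclideanLin_iff.mpr hA
  have hZ_perp : Z ∈ (LinearMap.ker A.toEuclideanLin)ᗮ := by
    refine (Submodule.mem_orthogonal' _ _).mpr fun p hp => ?_
    by_contra hZp
    obtain ⟨γ, -, hγ⟩ := hZ p (by rwa [dotp_eq_inner])
    rw [sum_sum_mul_mul_eq_inner_toEuclideanLin, LinearMap.mem_ker.mp hp, inner_zero_left,
      mul_zero, add_zero, neg_pos] at hγ
    exact hγ.not_ge hA.trace_nonneg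
  obtain ⟨r, hr, hle⟩ := hT.exists_pos_sq_inner_smul_le hZ_perp
  exact ⟨r, hr, fun ξ => by
    rw [dotp_eq_inner, sum_sum_mul_mul_eq_inner_toEuclideanLin]; exact hle ξ⟩

end
end

section
/- Let L^{α,β} u := −Tr(A^{α,β}(x)D²u) − b^{α,β}(x)·Du + c^{α,β}(x)u be a two-parameter family of linear operators with A^{α,β}(x) positive semidefinite and c^{α,β}(x) ≥ 0, such that the Isaacs operators F₋ := sup_β inf_α L^{α,β} and F₊ := inf_α sup_β L^{α,β} are finite and continuous. Let Z ∈ ℝ^d and x ∈ Ω. Then: (i) if there exists β̄ such that A^{α,β̄}(x) ≥ Z ⊗ Z for all α, then Z is a generalized subunit vector for F₋ at x; (ii) if for every α there exists β(α) such that A^{α,β(α)}(x) ≥ Z ⊗ Z, then Z is a generalized subunit vector for F₊ at x. -/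
open Set Metric Filter Topology

noncomputable section

/-- The two-parameter linear operator `L^{α,β}` evaluated at `(x,r,p,X)`. -/
def linOp2 {d : ℕ} {I J : Type*} (A : I → J → EV d → Matrix (Fin d) (Fin d) ℝ)
    (b : I → J → EV d → EV d) (c : I → J → EV d → ℝ) (α : I) (β : J)
    (x : EV d) (r : ℝ) (p : EV d) (X : Matrix (Fin d) (Fin d) ℝ) : ℝ :=
  -((A α β x) * X).trace - dotp (b α β x) p + c α β x * r

/-- The lower Hamilton–Jacobi–Isaacs operator `F₋ = sup_β inf_α L^{α,β}`. -/
def isaacsLower {d : ℕ} {I J : Type*} (A : I → J → EV d → Matrix (Fin d) (Fin d) ℝ)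
    (b : I → J → EV d → EV d) (c : I → J → EV d → ℝ) :
    EV d → ℝ → EV d → Matrix (Fin d) (Fin d) ℝ → ℝ :=
  fun x r p X => ⨆ β, ⨅ α, linOp2 A b c α β x r p X

/-- The upper Hamilton–Jacobi–Isaacs operator `F₊ = inf_α sup_β L^{α,β}`. -/
def isaacsUpper {d : ℕ} {I J : Type*} (A : I → J → EV d → Matrix (Fin d) (Fin d) ℝ)
    (b : I → J → EV d → EV d) (c : I → J → EV d → ℝ) :
    EV d → ℝ → EV d → Matrix (Fin d) (Fin d) ℝ → ℝ :=
  fun x r p X => ⨅ α, ⨆ β, linOp2 A b c α β x r p X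

lemma dotp_smul' {d : ℕ} (b p : EV d) (t : ℝ) : dotp b (t • p) = t * dotp b p := by
  simp only [dotp, Finset.mul_sum, PiLp.smul_apply, smul_eq_mul]
  exact Finset.sum_congr rfl fun i _ => by ring

lemma linOp2_scale {d : ℕ} {I J : Type*} (A : I → J → EV d → Matrix (Fin d) (Fin d) ℝ)
    (b : I → J → EV d → EV d) (c : I → J → EV d → ℝ) (α : I) (β : J)
    (x : EV d) (t : ℝ) (p : EV d) (X : Matrix (Fin d) (Fin d) ℝ) :
    linOp2 A b c α β x 0 (t • p) (t • X) = t * linOp2 A b c α β x 0 p X := by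
  simp only [linOp2, Matrix.mul_smul, Matrix.trace_smul, smul_eq_mul, dotp_smul', mul_zero]
  ring

lemma linOp2_neg_outer {d : ℕ} {I J : Type*} (A : I → J → EV d → Matrix (Fin d) (Fin d) ℝ)
    (b : I → J → EV d → EV d) (c : I → J → EV d → ℝ) (α : I) (β : J)
    (x : EV d) (p : EV d) :
    linOp2 A b c α β x 0 0 (-(outer p)) = ∑ i, ∑ j, A α β x i j * p i * p j := by
  have h0 : dotp (b α β x) (0 : EV d) = 0 := by simp [dotp]
  simp only [linOp2, mul_zero, add_zero, Matrix.mul_neg, Matrix.trace_neg, neg_neg, h0, sub_zero]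
  simp only [Matrix.trace, Matrix.diag_apply, Matrix.mul_apply, Matrix.of_apply, outer]
  exact Finset.sum_congr rfl fun i _ => Finset.sum_congr rfl fun j _ => by ring

/-- Generic criterion: positive homogeneity in `(p, X)` at `r = 0`, continuity at
`(x, 0, 0, -p⊗p)`, and positivity of `F(x,0,0,-p⊗p)` imply the subunit condition. -/
lemma subunit_of_pos {d : ℕ} (Ω : Set (EV d))
    (F : EV d → ℝ → EV d → Matrix (Fin d) (Fin d) ℝ → ℝ) (Z x : EV d) (hx : x ∈ Ω)
    (hcont : ContinuousOn
      (fun q : EV d × ℝ × EV d × Matrix (Fin d) (Fin d) ℝ =>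
        F q.1 q.2.1 q.2.2.1 q.2.2.2) {q | q.1 ∈ closure Ω})
    (hscale : ∀ t : ℝ, 0 ≤ t → ∀ (p : EV d) (X : Matrix (Fin d) (Fin d) ℝ),
      F x 0 (t • p) (t • X) = t * F x 0 p X)
    (hpos : ∀ p : EV d, dotp Z p ≠ 0 → 0 < F x 0 0 (-(outer p))) :
    IsSubunitAt F x Z := by
  intro p hp
  set g : ℝ → EV d × ℝ × EV d × Matrix (Fin d) (Fin d) ℝ :=
    fun t => (x, 0, t • p, t • (1 : Matrix (Fin d) (Fin d) ℝ) - outer p) with hg_def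
  have hg : Continuous g := by
    refine continuous_const.prodMk (continuous_const.prodMk (Continuous.prodMk ?_ ?_))
    · exact continuous_id.smul continuous_const
    · exact (continuous_id.smul continuous_const).sub continuous_const
  have hmaps : ∀ t : ℝ, g t ∈ {q : EV d × ℝ × EV d × Matrix (Fin d) (Fin d) ℝ |
      q.1 ∈ closure Ω} := fun t => subset_closure hx
  have hcomp : Continuous fun t =>
      F (g t).1 (g t).2.1 (g t).2.2.1 (g t).2.2.2 :=
    hcont.comp_continuous hg hmaps
  have hg0 : F (g 0).1 (g 0).2.1 (g 0).2.2.1 (g 0).2.2.2 = F x 0 0 (-(outer p)) := by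
    simp [hg_def, zero_sub]
  have hlim : Filter.Tendsto (fun t => F (g t).1 (g t).2.1 (g t).2.2.1 (g t).2.2.2)
      (nhds 0) (nhds (F x 0 0 (-(outer p)))) := by
    rw [← hg0]; exact hcomp.tendsto 0
  have hev : ∀ᶠ t : ℝ in nhds 0, 0 < F (g t).1 (g t).2.1 (g t).2.2.1 (g t).2.2.2 :=
    hlim.eventually (eventually_gt_nhds (hpos p hp))
  rw [Metric.eventually_nhds_iff] at hev
  obtain ⟨ε, hε, hball⟩ := hev
  set t : ℝ := ε / 2 with ht_def
  have ht : 0 < t := by positivity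
  have hdist : dist t (0 : ℝ) < ε := by
    rw [Real.dist_eq, sub_zero, abs_of_pos ht]; linarith
  have hFt : 0 < F x 0 (t • p) (t • (1 : Matrix (Fin d) (Fin d) ℝ) - outer p) := hball hdist
  refine ⟨t⁻¹, inv_pos.mpr ht, ?_⟩
  have hmat : t • ((1 : Matrix (Fin d) (Fin d) ℝ) - t⁻¹ • outer p)
      = t • (1 : Matrix (Fin d) (Fin d) ℝ) - outer p := by
    rw [smul_sub, smul_smul, mul_inv_cancel₀ ht.ne', one_smul]
  have := hscale t ht.le p ((1 : Matrix (Fin d) (Fin d) ℝ) - t⁻¹ • outer p)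
  rw [hmat] at this
  nlinarith [hFt, this]

/-- Lemma 3.9: sufficient conditions for generalized subunit vectors of the
Hamilton–Jacobi–Isaacs operators `F₋ = sup_β inf_α L^{α,β}` and `F₊ = inf_α sup_β L^{α,β}`. -/
theorem subunit_vectors_of_Isaacs {d : ℕ} (Ω : Set (EV d))
    (hΩ : IsOpen Ω) (hconn : IsConnected Ω) {I J : Type*} [Nonempty I] [Nonempty J]
    (A : I → J → EV d → Matrix (Fin d) (Fin d) ℝ) (b : I → J → EV d → EV d)
    (c : I → J → EV d → ℝ)
    (hpsd : ∀ α β x, (A α β x).PosSemidef) (hc : ∀ α β x, 0 ≤ c α β x)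
    (hfin1 : ∀ (β : J) (x : EV d) (r : ℝ) (p : EV d) (X : Matrix (Fin d) (Fin d) ℝ),
      BddBelow (Set.range fun α => linOp2 A b c α β x r p X))
    (hfin2 : ∀ (x : EV d) (r : ℝ) (p : EV d) (X : Matrix (Fin d) (Fin d) ℝ),
      BddAbove (Set.range fun β => ⨅ α, linOp2 A b c α β x r p X))
    (hfin3 : ∀ (α : I) (x : EV d) (r : ℝ) (p : EV d) (X : Matrix (Fin d) (Fin d) ℝ),
      BddAbove (Set.range fun β => linOp2 A b c α β x r p X))
    (hfin4 : ∀ (x : EV d) (r : ℝ) (p : EV d) (X : Matrix (Fin d) (Fin d) ℝ),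
      BddBelow (Set.range fun α => ⨆ β, linOp2 A b c α β x r p X))
    (hcont1 : ContinuousOn
      (fun q : EV d × ℝ × EV d × Matrix (Fin d) (Fin d) ℝ =>
        isaacsLower A b c q.1 q.2.1 q.2.2.1 q.2.2.2) {q | q.1 ∈ closure Ω})
    (hcont2 : ContinuousOn
      (fun q : EV d × ℝ × EV d × Matrix (Fin d) (Fin d) ℝ =>
        isaacsUpper A b c q.1 q.2.1 q.2.2.1 q.2.2.2) {q | q.1 ∈ closure Ω})
    (Z : EV d) (x : EV d) (hx : x ∈ Ω) :
    ((∃ β₀ : J, ∀ α : I, matGEouter (A α β₀ x) Z) → IsSubunitAt (isaacsLower A b c) x Z) ∧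
      ((∀ α : I, ∃ β : J, matGEouter (A α β x) Z) → IsSubunitAt (isaacsUpper A b c) x Z) := by
  have key : ∀ p : EV d, dotp Z p ≠ 0 → 0 < (dotp Z p) ^ 2 :=
    fun p hp => pow_two_pos_of_ne_zero hp
  constructor
  · rintro ⟨β₀, hβ₀⟩
    refine subunit_of_pos Ω (isaacsLower A b c) Z x hx hcont1 ?_ ?_
    · intro t ht p X
      simp only [isaacsLower]
      simp_rw [linOp2_scale, ← Real.mul_iInf_of_nonneg ht, ← Real.mul_iSup_of_nonneg ht]
    · intro p hp
      refine lt_of_lt_of_le (key p hp) ?_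
      have h1 : (dotp Z p) ^ 2 ≤ ⨅ α, linOp2 A b c α β₀ x 0 0 (-(outer p)) :=
        le_ciInf fun α => by rw [linOp2_neg_outer]; exact hβ₀ α p
      exact h1.trans (le_ciSup (hfin2 x 0 0 (-(outer p))) β₀)
  · intro hall
    refine subunit_of_pos Ω (isaacsUpper A b c) Z x hx hcont2 ?_ ?_
    · intro t ht p X
      simp only [isaacsUpper]
      simp_rw [linOp2_scale, ← Real.mul_iSup_of_nonneg ht, ← Real.mul_iInf_of_nonneg ht]
    · intro p hp
      refine lt_of_lt_of_le (key p hp) (le_ciInf fun α => ?_)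
      obtain ⟨β, hβ⟩ := hall α
      have h1 : (dotp Z p) ^ 2 ≤ linOp2 A b c α β x 0 0 (-(outer p)) := by
        rw [linOp2_neg_outer]; exact hβ p
      exact h1.trans (le_ciSup (hfin3 α x 0 0 (-(outer p))) β)

end
end

section
/- Let Ω ⊆ ℝ^d be open and connected, and let u ∈ USC(Ω) and v ∈ LSC(Ω) be, respectively, a viscosity subsolution and a viscosity supersolution of the Hamilton–Jacobi–Bellman equation inf_α {L^α u − f^α(x)} = 0 in Ω. Assume that for some r̄ > 0 the equation satisfies the Comparison Principle in every ball B(x,r) ⊆ Ω with 0 < r < r̄, and that the homogeneous operator F_i := inf_α L^α is continuous and verifies the Strong Maximum Principle in Ω. If u − v attains a nonnegative maximum in Ω, then u ≡ v + constant in Ω. -/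
open Set Metric Filter Topology

noncomputable section

/-- The linear degenerate elliptic operator `L^α` evaluated at `(x,r,p,X)`:
`-Tr(A^α(x) X) - b^α(x)·p + c^α(x) r`. -/
def linOp {d : ℕ} {I : Type*} (A : I → EV d → Matrix (Fin d) (Fin d) ℝ)
    (b : I → EV d → EV d) (c : I → EV d → ℝ) (α : I)
    (x : EV d) (r : ℝ) (p : EV d) (X : Matrix (Fin d) (Fin d) ℝ) : ℝ :=
  -((A α x) * X).trace - dotp (b α x) p + c α x * r

/-- The concave Hamilton–Jacobi–Bellman operator `F_i = inf_α L^α`. -/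
def hjbInf {d : ℕ} {I : Type*} (A : I → EV d → Matrix (Fin d) (Fin d) ℝ)
    (b : I → EV d → EV d) (c : I → EV d → ℝ) :
    EV d → ℝ → EV d → Matrix (Fin d) (Fin d) ℝ → ℝ :=
  fun x r p X => ⨅ α, linOp A b c α x r p X

/-- The convex Hamilton–Jacobi–Bellman operator `F_s = sup_α L^α`. -/
def hjbSup {d : ℕ} {I : Type*} (A : I → EV d → Matrix (Fin d) (Fin d) ℝ)
    (b : I → EV d → EV d) (c : I → EV d → ℝ) :
    EV d → ℝ → EV d → Matrix (Fin d) (Fin d) ℝ → ℝ :=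
  fun x r p X => ⨆ α, linOp A b c α x r p X

/-- The inhomogeneous HJB operator `F = inf_α (L^α - f^α)`. -/
def hjbInfF {d : ℕ} {I : Type*} (A : I → EV d → Matrix (Fin d) (Fin d) ℝ)
    (b : I → EV d → EV d) (c : I → EV d → ℝ) (f : I → EV d → ℝ) :
    EV d → ℝ → EV d → Matrix (Fin d) (Fin d) ℝ → ℝ :=
  fun x r p X => ⨅ α, (linOp A b c α x r p X - f α x)
/-- The (weak) Comparison Principle for the equation `F = 0` in the closed ball `B(x,r)`. -/
def ComparisonOnBall {d : ℕ} (F : EV d → ℝ → EV d → Matrix (Fin d) (Fin d) ℝ → ℝ)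
    (x : EV d) (r : ℝ) : Prop :=
  ∀ u v : EV d → ℝ, UpperSemicontinuousOn u (Metric.closedBall x r) →
    LowerSemicontinuousOn v (Metric.closedBall x r) →
    IsViscSubsolAll (Metric.ball x r) F u → IsViscSupersolAll (Metric.ball x r) F v →
    (∀ z ∈ Metric.sphere x r, u z ≤ v z) → ∀ z ∈ Metric.closedBall x r, u z ≤ v z


/-!
If a test function `φ` touched `w = u - v` from above at `x` with `F_i(x, w(x), Dφ, D²φ) > 0`,
then by continuity of `F_i` the lowered paraboloid perturbation
`h_ρ(y) = φ(y) + C + ρ (|y - x|² - ρ²)`, `C = w(x) - φ(x)`, still has `F_i(h_ρ) > 0` on a small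
closed ball `B(x, ρ)`. Since every `L^α` is linear, `F(v + h) ≥ F(v) + F_i(h)`, so `v + h_ρ` is a
supersolution of `F = 0` in `B(x, ρ)`; it dominates `u` on `∂B(x, ρ)`, where `h_ρ = φ + C`.
Local comparison then gives `u(x) ≤ v(x) + h_ρ(x) = u(x) - ρ³`, which is absurd. Thus `w` is a
viscosity subsolution of `F_i = 0`, and the Strong Maximum Principle for `F_i` applies to `w`.
-/

section Calculus

variable {d : ℕ} {f g : EV d → ℝ} {x : EV d}

theorem grad_fun_add (hf : DifferentiableAt ℝ f x) (hg : DifferentiableAt ℝ g x) :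
    grad (fun y => f y + g y) x = grad f x + grad g x := by
  ext j
  simp [grad, fderiv_fun_add hf hg]

theorem grad_fun_sub (hf : DifferentiableAt ℝ f x) (hg : DifferentiableAt ℝ g x) :
    grad (fun y => f y - g y) x = grad f x - grad g x := by
  ext j
  simp [grad, fderiv_fun_sub hf hg]

theorem contDiff_fderiv_apply (hf : ContDiff ℝ 2 f) (v : EV d) :
    ContDiff ℝ 1 fun y => fderiv ℝ f y v :=
  (ContinuousLinearMap.apply ℝ ℝ v).contDiff.comp (hf.fderiv_right (by norm_num))

theorem hess_fun_add (hf : ContDiff ℝ 2 f) (hg : ContDiff ℝ 2 g) :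
    hess (fun y => f y + g y) x = hess f x + hess g x := by
  ext i j
  have hfg : (fun y => fderiv ℝ (fun z => f z + g z) y (EuclideanSpace.single j 1)) =
      fun y => fderiv ℝ f y (EuclideanSpace.single j 1) +
        fderiv ℝ g y (EuclideanSpace.single j 1) := by
    funext y
    rw [fderiv_fun_add (hf.differentiable two_ne_zero y) (hg.differentiable two_ne_zero y)]
    rfl
  simp only [hess, Matrix.of_apply, Matrix.add_apply, hfg]
  rw [fderiv_fun_add ((contDiff_fderiv_apply hf _).differentiable one_ne_zero x)
    ((contDiff_fderiv_apply hg _).differentiable one_ne_zero x)]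
  rfl

theorem hess_fun_sub (hf : ContDiff ℝ 2 f) (hg : ContDiff ℝ 2 g) :
    hess (fun y => f y - g y) x = hess f x - hess g x := by
  ext i j
  have hfg : (fun y => fderiv ℝ (fun z => f z - g z) y (EuclideanSpace.single j 1)) =
      fun y => fderiv ℝ f y (EuclideanSpace.single j 1) -
        fderiv ℝ g y (EuclideanSpace.single j 1) := by
    funext y
    rw [fderiv_fun_sub (hf.differentiable two_ne_zero y) (hg.differentiable two_ne_zero y)]
    rfl
  simp only [hess, Matrix.of_apply, Matrix.sub_apply, hfg]
  rw [fderiv_fun_sub ((contDiff_fderiv_apply hf _).differentiable one_ne_zero x)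
    ((contDiff_fderiv_apply hg _).differentiable one_ne_zero x)]
  rfl

theorem continuous_grad (hf : ContDiff ℝ 1 f) : Continuous (grad f) :=
  (EuclideanSpace.equiv (Fin d) ℝ).symm.continuous.comp <|
    continuous_pi fun _ => (hf.continuous_fderiv one_ne_zero).clm_apply continuous_const

theorem continuous_hess (hf : ContDiff ℝ 2 f) : Continuous (hess f) :=
  continuous_matrix fun _ _ =>
    ((contDiff_fderiv_apply hf _).continuous_fderiv one_ne_zero).clm_apply continuous_const

end Calculus

section Paraboloid

variable {d : ℕ} (x₀ : EV d) (a C : ℝ)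

def paraboloid : EV d → ℝ := fun y => a * ‖y - x₀‖ ^ 2 + C

theorem contDiff_paraboloid : ContDiff ℝ 2 (paraboloid x₀ a C) :=
  (contDiff_const.mul ((contDiff_id.sub contDiff_const).norm_sq ℝ)).add contDiff_const

theorem fderiv_paraboloid_single (y : EV d) (j : Fin d) :
    fderiv ℝ (paraboloid x₀ a C) y (EuclideanSpace.single j 1) = 2 * a * (y j - x₀ j) := by
  have h : HasFDerivAt (paraboloid x₀ a C) _ y :=
    ((((hasFDerivAt_id (𝕜 := ℝ) y).sub_const x₀).norm_sq).const_mul a).add_const C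
  rw [h.fderiv]
  simp [EuclideanSpace.inner_single_right]
  ring

theorem grad_paraboloid (y : EV d) : grad (paraboloid x₀ a C) y = (2 * a) • (y - x₀) := by
  ext j
  simp [grad, fderiv_paraboloid_single]

theorem hess_paraboloid (y : EV d) :
    hess (paraboloid x₀ a C) y = (2 * a) • (1 : Matrix (Fin d) (Fin d) ℝ) := by
  ext i j
  have hlin : HasFDerivAt (fun z : EV d => 2 * a * (z j - x₀ j))
      ((2 * a) • (EuclideanSpace.proj j : EV d →L[ℝ] ℝ)) y :=
    (((EuclideanSpace.proj j : EV d →L[ℝ] ℝ).hasFDerivAt).sub_const (x₀ j)).const_mul (2 * a)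
  simp only [hess, Matrix.of_apply, fderiv_paraboloid_single, hlin.fderiv]
  simp [Matrix.one_apply, eq_comm]

end Paraboloid

theorem UpperSemicontinuousOn.sub_lowerSemicontinuousOn {α : Type*} [TopologicalSpace α]
    {s : Set α} {f g : α → ℝ} (hf : UpperSemicontinuousOn f s)
    (hg : LowerSemicontinuousOn g s) : UpperSemicontinuousOn (fun x => f x - g x) s := by
  simpa [sub_eq_add_neg] using hf.add hg.neg

theorem eventually_forall_closedBall_prodMk_mem {E : Type*} [PseudoMetricSpace E] {x : E}
    {s : Set (ℝ × E)} (hs : s ∈ 𝓝 ((0 : ℝ), x)) :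
    ∀ᶠ ρ in 𝓝 (0 : ℝ), ∀ y ∈ closedBall x ρ, (ρ, y) ∈ s := by
  obtain ⟨ε, hε, hball⟩ := Metric.mem_nhds_iff.1 hs
  filter_upwards [Metric.ball_mem_nhds (0 : ℝ) hε] with ρ hρ y hy
  rw [mem_ball, Real.dist_0_eq_abs] at hρ
  apply hball
  rw [mem_ball, Prod.dist_eq, Real.dist_eq, sub_zero]
  exact max_lt hρ ((mem_closedBall.1 hy).trans_lt ((le_abs_self ρ).trans_lt hρ))

section Viscosity

variable {d : ℕ} {F G : EV d → ℝ → EV d → Matrix (Fin d) (Fin d) ℝ → ℝ} {Ω U : Set (EV d)}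

theorem IsViscSubsolAll.mono {u : EV d → ℝ} (hu : IsViscSubsolAll Ω F u) (hU : IsOpen U)
    (hUΩ : U ⊆ Ω) : IsViscSubsolAll U F u :=
  fun φ hφ x hx hmax => hu φ hφ x (hUΩ hx) ((hmax.isLocalMax (hU.mem_nhds hx)).on Ω)

theorem IsViscSupersolAll.add_of_superadditive {v h : EV d → ℝ}
    (hv : IsViscSupersolAll Ω F v) (hU : IsOpen U) (hUΩ : U ⊆ Ω)
    (hFG : ∀ x ∈ U, ∀ r p X r' p' X',
      F x r p X + G x r' p' X' ≤ F x (r + r') (p + p') (X + X'))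
    (hh : ContDiff ℝ 2 h) (hGh : ∀ y ∈ U, 0 ≤ G y (h y) (grad h y) (hess h y)) :
    IsViscSupersolAll U F (fun y => v y + h y) := by
  intro θ hθ y hy hmin
  have hshift : (fun z => v z - (θ z - h z)) = fun z => v z + h z - θ z := by
    funext z; ring
  have hv' := hv (fun z => θ z - h z) (hθ.sub hh) y (hUΩ hy)
    (hshift ▸ (hmin.isLocalMin (hU.mem_nhds hy)).on Ω)
  rw [grad_fun_sub (hθ.differentiable two_ne_zero y) (hh.differentiable two_ne_zero y),
    hess_fun_sub hθ hh] at hv'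
  calc 0 ≤ F y (v y) (grad θ y - grad h y) (hess θ y - hess h y) +
        G y (h y) (grad h y) (hess h y) := add_nonneg hv' (hGh y hy)
    _ ≤ _ := hFG y hy _ _ _ _ _ _
    _ = F y (v y + h y) (grad θ y) (hess θ y) := by simp only [sub_add_cancel]

theorem eventually_pos_add_paraboloid {φ : EV d → ℝ} {x : EV d} {C : ℝ} (hφ : ContDiff ℝ 2 φ)
    (hG : ContinuousAt (fun q : EV d × ℝ × EV d × Matrix (Fin d) (Fin d) ℝ =>
      G q.1 q.2.1 q.2.2.1 q.2.2.2) (x, φ x + C, grad φ x, hess φ x))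
    (hpos : 0 < G x (φ x + C) (grad φ x) (hess φ x)) :
    ∀ᶠ q : ℝ × EV d in 𝓝 (0, x),
      0 < G q.2 (φ q.2 + paraboloid x q.1 (C - q.1 ^ 3) q.2)
        (grad (fun y => φ y + paraboloid x q.1 (C - q.1 ^ 3) y) q.2)
        (hess (fun y => φ y + paraboloid x q.1 (C - q.1 ^ 3) y) q.2) := by
  let Φ : ℝ × EV d → EV d × ℝ × EV d × Matrix (Fin d) (Fin d) ℝ := fun q =>
    (q.2, φ q.2 + paraboloid x q.1 (C - q.1 ^ 3) q.2, grad φ q.2 + (2 * q.1) • (q.2 - x),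
      hess φ q.2 + (2 * q.1) • (1 : Matrix (Fin d) (Fin d) ℝ))
  have hΦ : Continuous Φ := by
    have := continuous_grad (hφ.of_le one_le_two)
    have := continuous_hess hφ
    have := hφ.continuous
    unfold Φ paraboloid
    fun_prop
  have hΦ₀ : Φ (0, x) = (x, φ x + C, grad φ x, hess φ x) := by simp [Φ, paraboloid]
  filter_upwards [(hG.tendsto.comp (hΦ.tendsto' _ _ hΦ₀)).eventually_const_lt hpos] with q hq
  rwa [grad_fun_add (hφ.differentiable two_ne_zero _)
      ((contDiff_paraboloid _ _ _).differentiable two_ne_zero _),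
    hess_fun_add hφ (contDiff_paraboloid _ _ _), grad_paraboloid, hess_paraboloid]

theorem isViscSubsolAll_sub_of_comparisonOnBall {u v : EV d → ℝ} {rbar : ℝ} (hΩ : IsOpen Ω)
    (hFG : ∀ x ∈ Ω, ∀ r p X r' p' X',
      F x r p X + G x r' p' X' ≤ F x (r + r') (p + p') (X + X'))
    (hG : ContinuousOn (fun q : EV d × ℝ × EV d × Matrix (Fin d) (Fin d) ℝ =>
      G q.1 q.2.1 q.2.2.1 q.2.2.2) {q | q.1 ∈ Ω})
    (hrbar : 0 < rbar)
    (hCP : ∀ x r, 0 < r → r < rbar → ball x r ⊆ Ω → ComparisonOnBall F x r)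
    (husc : UpperSemicontinuousOn u Ω) (hlsc : LowerSemicontinuousOn v Ω)
    (hu : IsViscSubsolAll Ω F u) (hv : IsViscSupersolAll Ω F v) :
    IsViscSubsolAll Ω G (fun x => u x - v x) := by
  intro φ hφ x hx hmax
  by_contra! hpos
  set C := u x - v x - φ x with hC
  set h : ℝ → EV d → ℝ := fun ρ y => φ y + paraboloid x ρ (C - ρ ^ 3) y with hh
  have hGx : ContinuousAt (fun q : EV d × ℝ × EV d × Matrix (Fin d) (Fin d) ℝ =>
      G q.1 q.2.1 q.2.2.1 q.2.2.2) (x, φ x + C, grad φ x, hess φ x) :=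
    hG.continuousAt ((hΩ.preimage continuous_fst).mem_nhds hx)
  have hnear : ∀ᶠ q : ℝ × EV d in 𝓝 (0, x), q.2 ∈ Ω ∧ u q.2 - v q.2 - φ q.2 ≤ C ∧
      0 < G q.2 (h q.1 q.2) (grad (h q.1) q.2) (hess (h q.1) q.2) := by
    have hloc := (hΩ.eventually_mem hx).and (hmax.isLocalMax (hΩ.mem_nhds hx))
    filter_upwards [(continuous_snd.tendsto ((0 : ℝ), x)).eventually hloc,
      eventually_pos_add_paraboloid hφ hGx (by rwa [hC, add_sub_cancel])] with q hq hqpos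
    exact ⟨hq.1, hq.2, hqpos⟩
  obtain ⟨ρ, hρ, hρr, hball⟩ :=
    ((eventually_lt_nhds hrbar).and (eventually_forall_closedBall_prodMk_mem hnear)).exists_gt
  have hBΩ : closedBall x ρ ⊆ Ω := fun y hy => (hball y hy).1
  have hhρ : ContDiff ℝ 2 (h ρ) := hφ.add (contDiff_paraboloid _ _ _)
  have hψ : IsViscSupersolAll (ball x ρ) F (fun y => v y + h ρ y) :=
    hv.add_of_superadditive isOpen_ball (ball_subset_closedBall.trans hBΩ)
      (fun y hy => hFG y (hBΩ (ball_subset_closedBall hy))) hhρ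
      (fun y hy => (hball y (ball_subset_closedBall hy)).2.2.le)
  have hbdry : ∀ z ∈ sphere x ρ, u z ≤ v z + h ρ z := by
    intro z hz
    have hz' := (hball z (sphere_subset_closedBall hz)).2.1
    rw [mem_sphere, dist_eq_norm] at hz
    simp only [hh, paraboloid, hz]
    linarith
  have hcmp := hCP x ρ hρ hρr (ball_subset_closedBall.trans hBΩ) u (fun y => v y + h ρ y)
    (husc.mono hBΩ)
    ((hlsc.mono hBΩ).add (hhρ.continuous.lowerSemicontinuous.lowerSemicontinuousOn _))
    (hu.mono isOpen_ball (ball_subset_closedBall.trans hBΩ)) hψ hbdry x (mem_closedBall_self hρ.le)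
  simp only [hh, paraboloid, sub_self, norm_zero] at hcmp
  linarith [pow_pos hρ 3]

end Viscosity

section HJB

variable {d : ℕ} {I : Type*} (A : I → EV d → Matrix (Fin d) (Fin d) ℝ) (b : I → EV d → EV d)
  (c : I → EV d → ℝ)

theorem linOp_add (α : I) (x : EV d) (r r' : ℝ) (p p' : EV d) (X X' : Matrix (Fin d) (Fin d) ℝ) :
    linOp A b c α x (r + r') (p + p') (X + X') =
      linOp A b c α x r p X + linOp A b c α x r' p' X' := by
  simp only [linOp, Matrix.trace_add, dotp, PiLp.add_apply, mul_add, Finset.sum_add_distrib]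
  ring

theorem hjbInfF_add_hjbInf_le [Nonempty I] {f : I → EV d → ℝ} {x : EV d} {r r' : ℝ}
    {p p' : EV d} {X X' : Matrix (Fin d) (Fin d) ℝ}
    (hF : BddBelow (Set.range fun α => linOp A b c α x r p X - f α x))
    (hFi : BddBelow (Set.range fun α => linOp A b c α x r' p' X')) :
    hjbInfF A b c f x r p X + hjbInf A b c x r' p' X' ≤
      hjbInfF A b c f x (r + r') (p + p') (X + X') :=
  le_ciInf fun α => calc
    hjbInfF A b c f x r p X + hjbInf A b c x r' p' X'
        ≤ (linOp A b c α x r p X - f α x) + linOp A b c α x r' p' X' :=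
      add_le_add (ciInf_le hF α) (ciInf_le hFi α)
    _ = linOp A b c α x (r + r') (p + p') (X + X') - f α x := by rw [linOp_add]; ring

end HJB

theorem scp_from_local_comparison_and_smp_general {d : ℕ} (Ω : Set (EV d))
    (hΩ : IsOpen Ω) {I : Type*} [Nonempty I]
    (A : I → EV d → Matrix (Fin d) (Fin d) ℝ) (b : I → EV d → EV d)
    (c : I → EV d → ℝ) (f : I → EV d → ℝ)
    (hfinF : ∀ (x : EV d) (r : ℝ) (p : EV d) (X : Matrix (Fin d) (Fin d) ℝ),
      BddBelow (Set.range fun α => linOp A b c α x r p X - f α x))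
    (hfinFi : ∀ (x : EV d) (r : ℝ) (p : EV d) (X : Matrix (Fin d) (Fin d) ℝ),
      BddBelow (Set.range fun α => linOp A b c α x r p X))
    (hcontFi : ContinuousOn
      (fun q : EV d × ℝ × EV d × Matrix (Fin d) (Fin d) ℝ =>
        hjbInf A b c q.1 q.2.1 q.2.2.1 q.2.2.2) {q | q.1 ∈ closure Ω})
    (hCP : ∃ rbar : ℝ, 0 < rbar ∧ ∀ (x : EV d) (r : ℝ), 0 < r → r < rbar →
      Metric.ball x r ⊆ Ω → ComparisonOnBall (hjbInfF A b c f) x r)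
    (hSMP : ∀ w : EV d → ℝ, UpperSemicontinuousOn w Ω →
      IsViscSubsolAll Ω (hjbInf A b c) w →
      ∀ x₀ ∈ Ω, (∀ x ∈ Ω, w x ≤ w x₀) → 0 ≤ w x₀ → ∀ x ∈ Ω, w x = w x₀)
    (u v : EV d → ℝ)
    (husc : UpperSemicontinuousOn u Ω) (hlsc : LowerSemicontinuousOn v Ω)
    (hsub : IsViscSubsolAll Ω (hjbInfF A b c f) u)
    (hsup : IsViscSupersolAll Ω (hjbInfF A b c f) v)
    (x₀ : EV d) (hx₀ : x₀ ∈ Ω)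
    (hmax : ∀ x ∈ Ω, u x - v x ≤ u x₀ - v x₀) (hnn : 0 ≤ u x₀ - v x₀) :
    ∀ x ∈ Ω, u x - v x = u x₀ - v x₀ := by
  obtain ⟨rbar, hrbar, hCP⟩ := hCP
  have hw : IsViscSubsolAll Ω (hjbInf A b c) (fun x => u x - v x) :=
    isViscSubsolAll_sub_of_comparisonOnBall (F := hjbInfF A b c f) hΩ
      (fun x _ r p X r' p' X' => hjbInfF_add_hjbInf_le A b c (hfinF x r p X) (hfinFi x r' p' X'))
      (hcontFi.mono fun _ hq => subset_closure hq) hrbar hCP husc hlsc hsub hsup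
  exact hSMP _ (husc.sub_lowerSemicontinuousOn hlsc) hw x₀ hx₀ hmax hnn

/-- Lemma 4.1: local comparison plus the Strong Maximum Principle for the
homogeneous operator `F_i` yield the Strong Comparison Principle for `inf_α {L^α u - f^α} = 0`. -/
theorem scp_from_local_comparison_and_smp {d : ℕ} (Ω : Set (EV d))
    (hΩ : IsOpen Ω) (hconn : IsConnected Ω) {I : Type*} [Nonempty I]
    (A : I → EV d → Matrix (Fin d) (Fin d) ℝ) (b : I → EV d → EV d)
    (c : I → EV d → ℝ) (f : I → EV d → ℝ)
    (hpsd : ∀ α x, (A α x).PosSemidef) (hc : ∀ α x, 0 ≤ c α x)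
    (hfinF : ∀ (x : EV d) (r : ℝ) (p : EV d) (X : Matrix (Fin d) (Fin d) ℝ),
      BddBelow (Set.range fun α => linOp A b c α x r p X - f α x))
    (hfinFi : ∀ (x : EV d) (r : ℝ) (p : EV d) (X : Matrix (Fin d) (Fin d) ℝ),
      BddBelow (Set.range fun α => linOp A b c α x r p X))
    (hcontF : ContinuousOn
      (fun q : EV d × ℝ × EV d × Matrix (Fin d) (Fin d) ℝ =>
        hjbInfF A b c f q.1 q.2.1 q.2.2.1 q.2.2.2) {q | q.1 ∈ closure Ω})
    (hcontFi : ContinuousOn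
      (fun q : EV d × ℝ × EV d × Matrix (Fin d) (Fin d) ℝ =>
        hjbInf A b c q.1 q.2.1 q.2.2.1 q.2.2.2) {q | q.1 ∈ closure Ω})
    (hCP : ∃ rbar : ℝ, 0 < rbar ∧ ∀ (x : EV d) (r : ℝ), 0 < r → r < rbar →
      Metric.ball x r ⊆ Ω → ComparisonOnBall (hjbInfF A b c f) x r)
    (hSMP : ∀ w : EV d → ℝ, UpperSemicontinuousOn w Ω →
      IsViscSubsolAll Ω (hjbInf A b c) w →
      ∀ x₀ ∈ Ω, (∀ x ∈ Ω, w x ≤ w x₀) → 0 ≤ w x₀ → ∀ x ∈ Ω, w x = w x₀)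
    (u v : EV d → ℝ)
    (husc : UpperSemicontinuousOn u Ω) (hlsc : LowerSemicontinuousOn v Ω)
    (hsub : IsViscSubsolAll Ω (hjbInfF A b c f) u)
    (hsup : IsViscSupersolAll Ω (hjbInfF A b c f) v)
    (x₀ : EV d) (hx₀ : x₀ ∈ Ω)
    (hmax : ∀ x ∈ Ω, u x - v x ≤ u x₀ - v x₀) (hnn : 0 ≤ u x₀ - v x₀) :
    ∀ x ∈ Ω, u x - v x = u x₀ - v x₀ :=
  scp_from_local_comparison_and_smp_general Ω hΩ A b c f hfinF hfinFi hcontFi hCP hSMP u v husc hlsc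
    hsub hsup x₀ hx₀ hmax hnn
end
end
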